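/- Let V be a ℚ-graded vector space and ω a nilpotent degree-2 endomorphism of V. Then there exist an integer l ≥ 0, homogeneous vectors φ₁, …, φ_l ∈ V, and integers a₁ ≥ a₂ ≥ … ≥ a_l ≥ 0 such that ω^{a_j + 1} φ_j = 0 for every j and the family {ω^k φ_j : 1 ≤ j ≤ l, 0 ≤ k ≤ a_j} is a ℂ-basis of V. (That is, every nilpotent degree-2 endomorphism of a finite-dimensional ℚ-graded vector space admits a homogeneous Jordan basis.) -/

import Mathlib

open Module

section
variable {V : Type} [AddCommGroup V] [Module ℂ V]
    (Vp : ℚ → Submodule ℂ V) (hg : DirectSum.IsInternal Vp)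

noncomputable def myproj (p : ℚ) : Module.End ℂ V :=
  (Vp p).subtype ∘ₗ (DirectSum.component ℂ ℚ (fun q => ↥(Vp q)) p) ∘ₗ
    ((LinearEquiv.ofBijective (DirectSum.coeLinearMap Vp) hg).symm : V →ₗ[ℂ] DirectSum ℚ (fun q => ↥(Vp q)))

theorem myproj_mem (p : ℚ) (v : V) : myproj Vp hg p v ∈ Vp p := by
  simp [myproj]

theorem myproj_same (p : ℚ) (v : V) (h : v ∈ Vp p) : myproj Vp hg p v = v := by
  have h1 : (LinearEquiv.ofBijective (DirectSum.coeLinearMap Vp) hg).symm v p = ⟨v, h⟩ :=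
    hg.ofBijective_coeLinearMap_of_mem h
  simp [myproj, DirectSum.component, DFinsupp.lapply, h1]

theorem myproj_ne (p q : ℚ) (v : V) (h : v ∈ Vp q) (hne : p ≠ q) : myproj Vp hg p v = 0 := by
  have h1 : (LinearEquiv.ofBijective (DirectSum.coeLinearMap Vp) hg).symm v p = 0 :=
    hg.ofBijective_coeLinearMap_of_mem_ne hne.symm h
  simp [myproj, DirectSum.component, DFinsupp.lapply, h1]

theorem myproj_sum (v : V) : ∃ S : Finset ℚ, v = ∑ p ∈ S, myproj Vp hg p v := by
  classical
  set e := LinearEquiv.ofBijective (DirectSum.coeLinearMap Vp) hg with he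
  refine ⟨(e.symm v).support, ?_⟩
  have h1 : e.symm v = ∑ p ∈ (e.symm v).support, DirectSum.of (fun q => ↥(Vp q)) p ((e.symm v) p) :=
    (DirectSum.sum_support_of _).symm
  have h2 : v = e.toLinearMap (e.symm v) := by simp
  rw [h1, map_sum] at h2
  convert h2 using 2 with p hp
  simp only [myproj, LinearMap.coe_comp, Function.comp_apply, LinearEquiv.coe_coe,
    DirectSum.component, DFinsupp.lapply, LinearMap.coe_mk, AddHom.coe_mk,
    Submodule.coe_subtype, he, LinearEquiv.coe_coe, LinearEquiv.ofBijective_apply,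
    DirectSum.coeLinearMap_of]
  exact (DirectSum.coeLinearMap_of ..).symm

end

open Module Submodule
set_option maxHeartbeats 2000000
set_option synthInstance.maxHeartbeats 200000

/-- The conclusion: existence of a homogeneous Jordan basis. -/
def HJB (V : Type) [AddCommGroup V] [Module ℂ V]
    (Vp : ℚ → Submodule ℂ V) (ω : Module.End ℂ V) : Prop :=
  ∃ (l : ℕ) (φ : Fin l → V) (a : Fin l → ℕ),
    (∀ i j : Fin l, i ≤ j → a j ≤ a i) ∧
    (∀ j : Fin l, ∃ p : ℚ, φ j ∈ Vp p) ∧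
    (∀ j : Fin l, (ω ^ (a j + 1)) (φ j) = 0) ∧
    ∃ b : Basis (Σ j : Fin l, Fin (a j + 1)) ℂ V,
      ∀ jk : Σ j : Fin l, Fin (a j + 1), b jk = (ω ^ ((jk.2 : ℕ))) (φ jk.1)

theorem pow_mem_of_degree {V : Type} [AddCommGroup V] [Module ℂ V]
    (Vp : ℚ → Submodule ℂ V) (ω : Module.End ℂ V)
    (hdeg : ∀ p, (Vp p).map ω ≤ Vp (p + 2)) (k : ℕ) (p : ℚ) (v : V) (hv : v ∈ Vp p) :
    (ω ^ k) v ∈ Vp (p + 2 * k) := by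
  induction k with
  | zero => simpa using hv
  | succ k ih =>
    have h1 : (ω ^ (k + 1)) v = ω ((ω ^ k) v) := by
      rw [pow_succ', Module.End.mul_apply]
    have h2 : ω ((ω ^ k) v) ∈ Vp (p + 2 * k + 2) := hdeg _ ⟨_, ih, rfl⟩
    rw [h1]
    convert h2 using 2
    push_cast
    ring

theorem hjb_aux (n : ℕ) :
    ∀ (V : Type) [AddCommGroup V] [Module ℂ V] [FiniteDimensional ℂ V]
      (Vp : ℚ → Submodule ℂ V) (π : ℚ → Module.End ℂ V),
      (∀ p v, π p v ∈ Vp p) →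
      (∀ p v, v ∈ Vp p → π p v = v) →
      (∀ p q v, v ∈ Vp q → p ≠ q → π p v = 0) →
      (∀ v : V, ∃ S : Finset ℚ, v = ∑ p ∈ S, π p v) →
      ∀ ω : Module.End ℂ V, IsNilpotent ω → (∀ p, (Vp p).map ω ≤ Vp (p + 2)) →
      Module.finrank ℂ V = n → HJB V Vp ω := by
  induction n using Nat.strong_induction_on with
  | _ n IH =>
  intro V _ _ _ Vp π hmem hid hne hsum ω hnil hdeg hrank
  by_cases hV : Subsingleton V
  · refine ⟨0, 0, 0, fun i _ _ => i.elim0, fun j => j.elim0, fun j => j.elim0, ?_⟩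
    have : IsEmpty (Σ j : Fin 0, Fin ((0 : Fin 0 → ℕ) j + 1)) := ⟨fun x => x.1.elim0⟩
    exact ⟨Basis.empty _, fun jk => jk.1.elim0⟩
  have : Nontrivial V := not_subsingleton_iff_nontrivial.mp hV
  set K := LinearMap.ker ω with hKdef
  set W := LinearMap.range ω with hWdef
  -- kernel is nontrivial
  have hKne : K ≠ ⊥ := by
    intro h
    obtain ⟨k, hk⟩ := hnil
    have hinj : Function.Injective ω := by
      rw [← LinearMap.ker_eq_bot]; exact h
    have hinjk : ∀ j, Function.Injective ⇑(ω ^ j) := by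
      intro j
      induction j with
      | zero => intro x y hxy; simpa using hxy
      | succ j ih =>
        intro x y hxy
        simp only [pow_succ, Module.End.mul_apply] at hxy
        exact hinj (ih hxy)
    obtain ⟨x, y, hxy⟩ := exists_pair_ne V
    exact hxy (hinjk k (by simp [hk]))
  have hrankK : 0 < finrank ℂ K := by
    rcases Submodule.exists_mem_ne_zero_of_ne_bot hKne with ⟨x, hx, hx0⟩
    exact Module.finrank_pos_iff_exists_ne_zero.mpr ⟨⟨x, hx⟩, by simpa using hx0⟩
  have hrksum : finrank ℂ W + finrank ℂ K = finrank ℂ V :=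
    LinearMap.finrank_range_add_finrank_ker ω
  have hWlt : finrank ℂ W < n := by omega
  -- vanishing of projections outside the support
  have hvan : ∀ (v : V) (S : Finset ℚ), v = ∑ p ∈ S, π p v → ∀ r ∉ S, π r v = 0 := by
    intro v S hS r hr
    have : π r v = ∑ p ∈ S, π r (π p v) := by
      conv_lhs => rw [hS]
      rw [map_sum]
    rw [this]
    exact Finset.sum_eq_zero fun p hp => hne r p (π p v) (hmem p v) (fun h => hr (h ▸ hp))
  -- the key commutation relation
  have hcomm : ∀ (q : ℚ) (v : V), π q (ω v) = ω (π (q - 2) v) := by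
    intro q v
    obtain ⟨S, hS⟩ := hsum v
    have hterm : ∀ p, ω (π p v) ∈ Vp (p + 2) := fun p =>
      hdeg p ⟨π p v, hmem p v, rfl⟩
    have hexp : π q (ω v) = ∑ p ∈ S, π q (ω (π p v)) := by
      conv_lhs => rw [hS]
      rw [map_sum, map_sum]
    by_cases hqS : q - 2 ∈ S
    · rw [hexp, Finset.sum_eq_single_of_mem (q - 2) hqS]
      · rw [hid q _ (by simpa using hterm (q - 2))]
      · intro p _ hpq
        exact hne q (p + 2) _ (hterm p) (by intro h; apply hpq; linarith [h])
    · rw [hvan v S hS (q - 2) hqS, map_zero, hexp]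
      exact Finset.sum_eq_zero fun p hp => hne q (p + 2) _ (hterm p)
        (by intro h; apply hqS; rw [show p = q - 2 by linarith [h]] at hp; exact hp)
  -- kernel and range are graded
  have hKgr : ∀ v ∈ K, ∀ p, π p v ∈ K := by
    intro v hv p
    have := hcomm (p + 2) v
    rw [LinearMap.mem_ker.mp hv, map_zero] at this
    exact LinearMap.mem_ker.mpr (by simpa using this.symm)
  have hWgr : ∀ v ∈ W, ∀ p, π p v ∈ W := by
    intro v hv p
    obtain ⟨u, rfl⟩ := LinearMap.mem_range.mp hv
    rw [hcomm p u]
    exact LinearMap.mem_range_self _ _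
  have hWmap : ∀ x ∈ W, ω x ∈ W := fun x _ => LinearMap.mem_range_self _ _
  -- homogeneous preimages
  have hpre : ∀ (p : ℚ) (x : V), x ∈ W → x ∈ Vp p → ∃ y, y ∈ Vp (p - 2) ∧ ω y = x := by
    intro p x hxW hxp
    obtain ⟨u, rfl⟩ := LinearMap.mem_range.mp hxW
    exact ⟨π (p - 2) u, hmem _ _, by rw [← hcomm p u, hid p _ hxp]⟩
  -- graded structure on W
  set Wp : ℚ → Submodule ℂ ↥W := fun p => (Vp p).comap W.subtype with hWp
  set πW : ℚ → Module.End ℂ ↥W := fun p => (π p).restrict (fun x hx => hWgr x hx p) with hπW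
  have hmemW : ∀ p (w : ↥W), πW p w ∈ Wp p := by
    intro p w
    simp only [hWp, Submodule.mem_comap, hπW, LinearMap.restrict_coe_apply, Submodule.coe_subtype]
    exact hmem p w
  have hidW : ∀ p (w : ↥W), w ∈ Wp p → πW p w = w := by
    intro p w hw
    apply Subtype.ext
    simp only [hπW, LinearMap.restrict_coe_apply]
    exact hid p w hw
  have hneW : ∀ p q (w : ↥W), w ∈ Wp q → p ≠ q → πW p w = 0 := by
    intro p q w hw hpq
    apply Subtype.ext
    simp only [hπW, LinearMap.restrict_coe_apply]
    simpa using hne p q w hw hpq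
  have hsumW : ∀ w : ↥W, ∃ S : Finset ℚ, w = ∑ p ∈ S, πW p w := by
    intro w
    obtain ⟨S, hS⟩ := hsum (w : V)
    refine ⟨S, Subtype.ext ?_⟩
    push_cast
    rw [hS]
    exact Finset.sum_congr rfl fun p _ => by
      simp [hπW, LinearMap.restrict_coe_apply]
  set ωW : Module.End ℂ ↥W := ω.restrict hWmap with hωW
  have hcoe_pow : ∀ (k : ℕ) (w : ↥W), ((ωW ^ k) w : V) = (ω ^ k) (w : V) := by
    intro k w
    rw [hωW, Module.End.pow_restrict, LinearMap.restrict_coe_apply]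
  have hnilW : IsNilpotent ωW := by
    obtain ⟨k, hk⟩ := hnil
    exact ⟨k, by ext w; rw [hcoe_pow, hk]; simp⟩
  have hdegW : ∀ p, (Wp p).map ωW ≤ Wp (p + 2) := by
    rintro p w ⟨y, hy, rfl⟩
    simp only [hWp, Submodule.mem_comap, Submodule.coe_subtype, hωW,
      LinearMap.restrict_coe_apply]
    exact hdeg p ⟨y, hy, rfl⟩
  obtain ⟨l, φ', a, hmono, hhom', hzero', b', hb'⟩ :=
    IH (finrank ℂ ↥W) hWlt ↥W Wp πW hmemW hidW hneW hsumW ωW hnilW hdegW rfl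
  classical
  set φ : Fin l → V := fun j => (φ' j : V) with hφdef
  have hφW : ∀ j, φ j ∈ W := fun j => (φ' j).2
  have hhom : ∀ j, ∃ p, φ j ∈ Vp p := fun j => hhom' j
  choose degφ hdegφ using hhom
  have hzero : ∀ j, (ω ^ (a j + 1)) (φ j) = 0 := by
    intro j
    rw [← hcoe_pow, hzero' j, Submodule.coe_zero]
  -- homogeneous preimages of the φ's
  have hpsi : ∀ j, ∃ y, y ∈ Vp (degφ j - 2) ∧ ω y = φ j := fun j =>
    hpre (degφ j) (φ j) (hφW j) (hdegφ j)
  choose ψ hψdeg hψω using hpsi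
  -- the tops of the Jordan chains in W, living in the kernel
  set t : Fin l → V := fun j => (ω ^ (a j)) (φ j) with htdef
  have htK : ∀ j, t j ∈ K := by
    intro j
    rw [hKdef, LinearMap.mem_ker, htdef]
    have := hzero j
    rwa [pow_succ', Module.End.mul_apply] at this
  have hb'coe : ∀ jk : Σ j : Fin l, Fin (a j + 1), (b' jk : V) = (ω ^ (jk.2 : ℕ)) (φ jk.1) := by
    intro jk
    rw [hb' jk, hcoe_pow]
  have htb' : ∀ j, t j = (b' ⟨j, ⟨a j, Nat.lt_succ_self _⟩⟩ : V) := by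
    intro j
    rw [hb'coe]
  set tK : Fin l → ↥K := fun j => ⟨t j, htK j⟩ with htKdef
  -- independence of the t's
  have htind : LinearIndependent ℂ t := by
    have h1 : LinearIndependent ℂ (fun j : Fin l => b' ⟨j, ⟨a j, Nat.lt_succ_self _⟩⟩) :=
      b'.linearIndependent.comp (fun j => ⟨j, ⟨a j, Nat.lt_succ_self _⟩⟩)
        (fun i j h => by cases h; rfl)
    have h2 := h1.map' W.subtype (Submodule.ker_subtype W)
    convert h2 using 1
    funext j
    exact htb' j
    rfl
  have htKind : LinearIndependent ℂ tK := by
    apply LinearIndependent.of_comp K.subtype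
    convert htind using 1
    rfl
  -- extend to a homogeneous basis of the kernel
  set homK : Set ↥K := {x : ↥K | ∃ p, (x : V) ∈ Vp p} with hhomK
  have hsub : Set.range tK ⊆ homK := by
    rintro x ⟨j, rfl⟩
    exact ⟨degφ j + 2 * a j, pow_mem_of_degree Vp ω hdeg (a j) (degφ j) (φ j) (hdegφ j)⟩
  have hsli : LinearIndependent ℂ ((↑) : Set.range tK → ↥K) := (linearIndepOn_id_range_iff htKind.injective).mpr htKind
  obtain ⟨bset, hbt, hsb, htspan, hbli⟩ := exists_linearIndepOn_id_extension hsli hsub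
  replace hbli : LinearIndependent ℂ ((↑) : bset → ↥K) := hbli
  have hspan : Submodule.span ℂ bset = ⊤ := by
    rw [eq_top_iff]
    intro x _
    have hx : x ∈ Submodule.span ℂ homK := by
      obtain ⟨S, hS⟩ := hsum (x : V)
      have : x = ∑ p ∈ S, (⟨π p (x : V), hKgr x x.2 p⟩ : ↥K) := by
        apply Subtype.ext
        push_cast
        exact hS
      rw [this]
      exact Submodule.sum_mem _ fun p _ => Submodule.subset_span ⟨p, hmem p _⟩
    refine Submodule.span_le.mpr ?_ hx
    intro y hy
    exact htspan hy
  -- finiteness and basis of the kernel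
  have hbfin : bset.Finite := hbli.setFinite
  haveI hbfint : Fintype ↥bset := hbfin.fintype
  have hbbasis : Basis ↥bset ℂ ↥K := Basis.mk hbli (by rw [Subtype.range_coe, hspan])
  set diff : Set ↥K := bset \ Set.range tK with hdiffdef
  haveI hdfint : Fintype ↥diff := (hbfin.subset Set.diff_subset).fintype
  set m := Fintype.card ↥diff with hmdef
  set eDiff : Fin m ≃ ↥diff := (Fintype.equivFin ↥diff).symm with heDiff
  set χ : Fin m → V := fun i => ((eDiff i : ↥K) : V) with hχdef
  have hχK : ∀ i, χ i ∈ K := fun i => ((eDiff i : ↥K)).2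
  have hχhom : ∀ i, ∃ p, χ i ∈ Vp p := fun i => hbt (Set.diff_subset (eDiff i).2)
  have hχω : ∀ i, ω (χ i) = 0 := fun i => LinearMap.mem_ker.mp (hχK i)
  -- counting the kernel
  set gfun : Fin l ⊕ Fin m → ↥bset := fun s => Sum.elim
    (fun j => (⟨tK j, hsb ⟨j, rfl⟩⟩ : ↥bset))
    (fun i => (⟨(eDiff i : ↥K), Set.diff_subset (eDiff i).2⟩ : ↥bset)) s with hgfun
  have hginj : Function.Injective gfun := by
    rintro (i | i) (j | j) h <;> simp only [hgfun, Sum.elim_inl, Sum.elim_inr,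
      Subtype.mk.injEq] at h
    · exact congrArg Sum.inl (htKind.injective h)
    · exact absurd ⟨i, h⟩ ((eDiff j).2.2)
    · exact absurd ⟨j, h.symm⟩ ((eDiff i).2.2)
    · exact congrArg Sum.inr (eDiff.injective (Subtype.ext h))
  have hgsurj : Function.Surjective gfun := by
    rintro ⟨x, hx⟩
    by_cases hxs : x ∈ Set.range tK
    · obtain ⟨j, rfl⟩ := hxs
      exact ⟨Sum.inl j, rfl⟩
    · refine ⟨Sum.inr (eDiff.symm ⟨x, hx, hxs⟩), ?_⟩
      simp [hgfun]
  have hcardb : Fintype.card ↥bset = l + m := by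
    rw [← Fintype.card_congr (Equiv.ofBijective gfun ⟨hginj, hgsurj⟩)]
    simp
  have hfrK : finrank ℂ ↥K = l + m := by
    rw [Module.finrank_eq_card_basis hbbasis, hcardb]
  have hfrW : finrank ℂ ↥W = ∑ j : Fin l, (a j + 1) := by
    rw [Module.finrank_eq_card_basis b']
    simp [Fintype.card_sigma]
  -- assemble the final data
  set σe : Fin l ⊕ Fin m ≃ Fin (l + m) := finSumFinEquiv with hσe
  set A : Fin (l + m) → ℕ := fun j => Sum.elim (fun j0 : Fin l => a j0 + 1) (fun _ => 0) (σe.symm j)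
    with hAdef
  set Φ : Fin (l + m) → V := fun j => Sum.elim ψ χ (σe.symm j) with hΦdef
  have hAl : ∀ j0 : Fin l, A (σe (Sum.inl j0)) = a j0 + 1 := by
    intro j0; simp [hAdef]
  have hAr : ∀ i : Fin m, A (σe (Sum.inr i)) = 0 := by
    intro i; simp [hAdef]
  have hΦl : ∀ j0 : Fin l, Φ (σe (Sum.inl j0)) = ψ j0 := by
    intro j0; simp [hΦdef]
  have hΦr : ∀ i : Fin m, Φ (σe (Sum.inr i)) = χ i := by
    intro i; simp [hΦdef]
  have hAmono : ∀ i j : Fin (l + m), i ≤ j → A j ≤ A i := by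
    intro i j hij
    rcases hsj : σe.symm j with j0 | j0
    · rcases hsi : σe.symm i with i0 | i0
      · have hi : i = σe (Sum.inl i0) := by rw [← hsi, Equiv.apply_symm_apply]
        have hj : j = σe (Sum.inl j0) := by rw [← hsj, Equiv.apply_symm_apply]
        have hival : (i : ℕ) = (i0 : ℕ) := by
          rw [hi, hσe, finSumFinEquiv_apply_left, Fin.coe_castAdd]
        have hjval : (j : ℕ) = (j0 : ℕ) := by
          rw [hj, hσe, finSumFinEquiv_apply_left, Fin.coe_castAdd]
        have hle : i0 ≤ j0 := by
          have := (Fin.le_def).mp hij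
          rw [Fin.le_def]; omega
        simp only [hAdef, hsi, hsj, Sum.elim_inl]
        exact Nat.succ_le_succ (hmono i0 j0 hle)
      · have hi : i = σe (Sum.inr i0) := by rw [← hsi, Equiv.apply_symm_apply]
        have hj : j = σe (Sum.inl j0) := by rw [← hsj, Equiv.apply_symm_apply]
        have hival : (i : ℕ) = l + (i0 : ℕ) := by
          rw [hi, hσe, finSumFinEquiv_apply_right, Fin.coe_natAdd]
        have hjval : (j : ℕ) = (j0 : ℕ) := by
          rw [hj, hσe, finSumFinEquiv_apply_left, Fin.coe_castAdd]
        have := (Fin.le_def).mp hij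
        have := j0.isLt
        omega
    · simp only [hAdef, hsj, Sum.elim_inr]
      exact Nat.zero_le _
  have hΦhom : ∀ j, ∃ p, Φ j ∈ Vp p := by
    intro j
    rcases hsj : σe.symm j with j0 | i
    · exact ⟨degφ j0 - 2, by simp only [hΦdef, hsj, Sum.elim_inl]; exact hψdeg j0⟩
    · obtain ⟨p, hp⟩ := hχhom i
      exact ⟨p, by simp only [hΦdef, hsj, Sum.elim_inr]; exact hp⟩
  have hA1 : ∀ j, (ω ^ (A j + 1)) (Φ j) = 0 := by
    intro j
    rcases hsj : σe.symm j with j0 | i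
    · simp only [hAdef, hΦdef, hsj, Sum.elim_inl]
      rw [pow_succ, Module.End.mul_apply, hψω j0, hzero j0]
    · simp only [hAdef, hΦdef, hsj, Sum.elim_inr, zero_add, pow_one]
      exact hχω i
  set F : (Σ j : Fin (l + m), Fin (A j + 1)) → V := fun x => (ω ^ (x.2 : ℕ)) (Φ x.1) with hF
  have hcard : Fintype.card (Σ j : Fin (l + m), Fin (A j + 1)) = finrank ℂ V := by
    rw [Fintype.card_sigma]
    simp only [Fintype.card_fin]
    rw [← Equiv.sum_comp σe (fun j => A j + 1), Fintype.sum_sum_type]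
    have e1 : ∀ j0 : Fin l, A (σe (Sum.inl j0)) + 1 = (a j0 + 1) + 1 := fun j0 => by
      rw [hAl]
    have e2 : ∀ i : Fin m, A (σe (Sum.inr i)) + 1 = 1 := fun i => by rw [hAr]
    rw [Finset.sum_congr rfl fun j0 _ => e1 j0, Finset.sum_congr rfl fun i _ => e2 i]
    rw [Finset.sum_add_distrib]
    simp only [Finset.sum_const, Finset.card_univ, Fintype.card_fin, smul_eq_mul, mul_one]
    omega
  have hspanF : ⊤ ≤ Submodule.span ℂ (Set.range F) := by
    have hbU : ∀ x : ↥K, x ∈ bset → (x : V) ∈ Set.range F := by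
      intro x hx
      by_cases hxs : x ∈ Set.range tK
      · obtain ⟨j, rfl⟩ := hxs
        refine ⟨⟨σe (Sum.inl j), ⟨a j + 1, by rw [hAl]; omega⟩⟩, ?_⟩
        show (ω ^ (a j + 1)) (Φ (σe (Sum.inl j))) = t j
        rw [hΦl, pow_succ, Module.End.mul_apply, hψω j, htdef]
      · refine ⟨⟨σe (Sum.inr (eDiff.symm ⟨x, hx, hxs⟩)), ⟨0, Nat.succ_pos _⟩⟩, ?_⟩
        show (ω ^ (0 : ℕ)) (Φ (σe (Sum.inr _))) = (x : V)
        rw [pow_zero, Module.End.one_apply, hΦr, hχdef]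
        simp
    have hKU : ∀ x : ↥K, (x : V) ∈ Submodule.span ℂ (Set.range F) := by
      intro x
      have hx : x ∈ Submodule.span ℂ bset := by rw [hspan]; trivial
      have h2 : (Submodule.span ℂ bset).map K.subtype ≤ Submodule.span ℂ (Set.range F) := by
        rw [Submodule.map_span]
        apply Submodule.span_le.mpr
        rintro y ⟨z, hz, rfl⟩
        exact Submodule.subset_span (hbU z hz)
      exact h2 ⟨x, hx, rfl⟩
    have hWle : W ≤ Submodule.map ω (Submodule.span ℂ (Set.range F)) := by
      have hWeq : Submodule.map W.subtype (Submodule.span ℂ (Set.range ⇑b')) = W := by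
        rw [b'.span_eq, Submodule.map_top, Submodule.range_subtype]
      rw [← hWeq, Submodule.map_span]
      apply Submodule.span_le.mpr
      rintro y ⟨z, ⟨jk, rfl⟩, rfl⟩
      refine ⟨(ω ^ (jk.2 : ℕ)) (ψ jk.1),
        Submodule.subset_span ⟨⟨σe (Sum.inl jk.1), ⟨(jk.2 : ℕ), by rw [hAl]; omega⟩⟩, ?_⟩, ?_⟩
      · show (ω ^ ((jk.2 : ℕ))) (Φ (σe (Sum.inl jk.1))) = (ω ^ (jk.2 : ℕ)) (ψ jk.1)
        rw [hΦl]
      · show ω ((ω ^ (jk.2 : ℕ)) (ψ jk.1)) = (W.subtype ∘ ⇑b') jk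
        have : (W.subtype ∘ ⇑b') jk = (ω ^ (jk.2 : ℕ)) (φ jk.1) := hb'coe jk
        rw [this]
        calc ω ((ω ^ (jk.2 : ℕ)) (ψ jk.1)) = (ω ^ ((jk.2 : ℕ) + 1)) (ψ jk.1) := by
              rw [pow_succ', Module.End.mul_apply]
          _ = (ω ^ (jk.2 : ℕ)) (ω (ψ jk.1)) := by rw [pow_succ, Module.End.mul_apply]
          _ = (ω ^ (jk.2 : ℕ)) (φ jk.1) := by rw [hψω]
    intro v _
    obtain ⟨u, hu, huv⟩ := hWle (LinearMap.mem_range_self ω v)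
    have hvu : v - u ∈ K := by
      rw [hKdef, LinearMap.mem_ker, map_sub, huv, sub_self]
    have hv : v = (v - u) + u := by abel
    rw [hv]
    exact Submodule.add_mem _ (hKU ⟨v - u, hvu⟩) hu
  refine ⟨l + m, Φ, A, hAmono, hΦhom, hA1,
    basisOfTopLeSpanOfCardEqFinrank F hspanF hcard, fun jk => ?_⟩
  rw [coe_basisOfTopLeSpanOfCardEqFinrank]

/-- `ω` is a degree-2 endomorphism with respect to the ℚ-grading `Vp`. -/
def IsDegreeTwo {V : Type} [AddCommGroup V] [Module ℂ V]
    (Vp : ℚ → Submodule ℂ V) (ω : Module.End ℂ V) : Prop :=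
  ∀ p : ℚ, (Vp p).map ω ≤ Vp (p + 2)

/-- Every nilpotent degree-2 endomorphism `ω` of a finite-dimensional ℚ-graded
vector space `V = ⊕_p V^p` admits a homogeneous Jordan basis: there are
homogeneous vectors `φ₁, …, φ_l` and integers `a₁ ≥ … ≥ a_l ≥ 0` with
`ω^(a_j+1) φ_j = 0` and such that `{ω^k φ_j : 1 ≤ j ≤ l, 0 ≤ k ≤ a_j}` is a
basis of `V`. -/
theorem exists_homogeneous_jordan_basis
    {V : Type} [AddCommGroup V] [Module ℂ V] [FiniteDimensional ℂ V]
    (Vp : ℚ → Submodule ℂ V) (hg : DirectSum.IsInternal Vp)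
    (ω : Module.End ℂ V) (hnil : IsNilpotent ω) (hdeg : IsDegreeTwo Vp ω) :
    ∃ (l : ℕ) (φ : Fin l → V) (a : Fin l → ℕ),
      (∀ i j : Fin l, i ≤ j → a j ≤ a i) ∧
      (∀ j : Fin l, ∃ p : ℚ, φ j ∈ Vp p) ∧
      (∀ j : Fin l, (ω ^ (a j + 1)) (φ j) = 0) ∧
      ∃ b : Basis (Σ j : Fin l, Fin (a j + 1)) ℂ V,
        ∀ jk : Σ j : Fin l, Fin (a j + 1), b jk = (ω ^ ((jk.2 : ℕ))) (φ jk.1) := by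
  exact hjb_aux (Module.finrank ℂ V) V Vp (myproj Vp hg) (myproj_mem Vp hg)
    (myproj_same Vp hg) (myproj_ne Vp hg) (myproj_sum Vp hg) ω hnil hdeg rfl
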